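/- The logarithmic moment of M_σ outside the unit ball satisfies ∫_{{x : ‖x‖ > 1}} ln‖x‖ · M_σ(dx) = ∫_{S×(0,2)} z^{−2} σ(d(u,z)), the equality holding in [0,∞]; in particular this moment is finite if and only if ∫_{S×(0,2)} z^{−2} dσ < ∞. -/

import Mathlib

/-! Since ‖w • u‖ = w for ‖u‖ = 1 and w > 0, disintegrating `Msig σ` over `σ` reduces the moment
to `∫₁^∞ log w · w^{-(z+1)} dw`, which equals `z⁻²` by the primitive
`-(log w · w^{-z}) / z - w^{-z} / z²` (it vanishes at infinity and equals `-z⁻²` at `w = 1`). -/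

open MeasureTheory Real ENNReal

/-- The measure `M_σ` on `E ∖ {0}` associated with a finite Borel measure `σ` on
`S × (0,2)` (modelled as a measure on `E × ℝ` concentrated on the unit sphere times `(0,2)`):
`M_σ(B) = ∫_{S×(0,2)} (∫_0^∞ 1_B(w·u) w^{-(z+1)} dw) σ(d(u,z))`. -/
noncomputable def Msig {E : Type*} [NormedAddCommGroup E] [NormedSpace ℝ E]
    [MeasurableSpace E] [BorelSpace E] (σ : Measure (E × ℝ)) : Measure E :=
  σ.bind (fun p => Measure.map (fun w : ℝ => w • p.1)
    ((MeasureTheory.volume.restrict (Set.Ioi (0:ℝ))).withDensity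
        (fun w => ENNReal.ofReal (w ^ (-(p.2 + 1))))))

open Filter Set Topology

section LogMoment

variable {z : ℝ}

theorem hasDerivAt_log_mul_rpow_primitive (hz : z ≠ 0) {x : ℝ} (hx : 0 < x) :
    HasDerivAt (fun x ↦ -(Real.log x * x ^ (-z)) / z - x ^ (-z) / z ^ 2)
      (Real.log x * x ^ (-(z + 1))) x := by
  have hlog : HasDerivAt Real.log x⁻¹ x := hasDerivAt_log hx.ne'
  have hpow : HasDerivAt (fun x ↦ x ^ (-z)) (-z * x ^ (-z - 1)) x := by
    simpa using hasDerivAt_rpow_const (p := -z) (Or.inl hx.ne')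
  refine (((hlog.mul hpow).neg.div_const z).sub (hpow.div_const (z ^ 2))).congr_deriv ?_
  have hinv : x⁻¹ * x ^ (-z) = x ^ (-z - 1) := by
    rw [← rpow_neg_one x, ← rpow_add hx]; ring_nf
  rw [show -(z + 1) = -z - 1 by ring, hinv]
  field_simp
  ring

theorem tendsto_log_mul_rpow_primitive_atTop (hz : 0 < z) :
    Tendsto (fun x ↦ -(Real.log x * x ^ (-z)) / z - x ^ (-z) / z ^ 2) atTop (𝓝 0) := by
  have hlog : Tendsto (fun x ↦ Real.log x * x ^ (-z)) atTop (𝓝 0) :=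
    (isLittleO_log_rpow_atTop hz).tendsto_div_nhds_zero.congr' <| by
      filter_upwards [eventually_gt_atTop 0] with x hx
      rw [div_eq_mul_inv, ← rpow_neg hx.le]
  simpa [neg_div] using (hlog.div_const z).neg.sub ((tendsto_rpow_neg_atTop hz).div_const (z ^ 2))

theorem lintegral_Ioi_one_log_mul_rpow (hz : 0 < z) :
    ∫⁻ w in Ioi 1, ENNReal.ofReal (Real.log w * w ^ (-(z + 1))) = ENNReal.ofReal ((z ^ 2)⁻¹) := by
  have hderiv : ∀ x ∈ Ici (1 : ℝ),
      HasDerivAt (fun x ↦ -(Real.log x * x ^ (-z)) / z - x ^ (-z) / z ^ 2)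
        (Real.log x * x ^ (-(z + 1))) x :=
    fun x hx ↦ hasDerivAt_log_mul_rpow_primitive hz.ne' (one_pos.trans_le hx)
  have hnonneg : ∀ x ∈ Ioi (1 : ℝ), 0 ≤ Real.log x * x ^ (-(z + 1)) :=
    fun x hx ↦ mul_nonneg (log_nonneg hx.le) (rpow_nonneg (one_pos.trans hx).le _)
  have hlim := tendsto_log_mul_rpow_primitive_atTop hz
  rw [← ofReal_integral_eq_lintegral_ofReal (integrableOn_Ioi_deriv_of_nonneg' hderiv hnonneg hlim)
    ((ae_restrict_mem measurableSet_Ioi).mono hnonneg),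
    integral_Ioi_of_hasDerivAt_of_nonneg' hderiv hnonneg hlim]
  simp

end LogMoment

noncomputable def powerLawMeasure (z : ℝ) : Measure ℝ :=
  (volume.restrict (Ioi 0)).withDensity fun w ↦ ENNReal.ofReal (w ^ (-(z + 1)))

section RadialKernel

variable {E : Type*} [NormedAddCommGroup E] [NormedSpace ℝ E] [MeasurableSpace E] [BorelSpace E]

noncomputable def radialKernel (p : E × ℝ) : Measure E :=
  (powerLawMeasure p.2).map (· • p.1)

theorem Msig_eq_bind_radialKernel (σ : Measure (E × ℝ)) : Msig σ = σ.bind radialKernel := rfl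

theorem lintegral_radialKernel (p : E × ℝ) {f : E → ℝ≥0∞} (hf : Measurable f) :
    ∫⁻ x, f x ∂radialKernel p = ∫⁻ w in Ioi 0, ENNReal.ofReal (w ^ (-(p.2 + 1))) * f (w • p.1) := by
  have hsmul : Measurable fun w : ℝ ↦ w • p.1 := by fun_prop
  rw [radialKernel, lintegral_map hf hsmul, powerLawMeasure,
    lintegral_withDensity_eq_lintegral_mul _ (by fun_prop) (g := fun w ↦ f (w • p.1))
      (hf.comp hsmul)]
  rfl

theorem measurable_radialKernel : Measurable (radialKernel : E × ℝ → Measure E) := by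
  refine Measure.measurable_of_measurable_coe _ fun s hs ↦ ?_
  simp_rw [← lintegral_indicator_one hs, lintegral_radialKernel _ (measurable_one.indicator hs)]
  refine Measurable.lintegral_prod_right' (f := fun q : (E × ℝ) × ℝ ↦
    ENNReal.ofReal (q.2 ^ (-(q.1.2 + 1))) * s.indicator 1 (q.2 • q.1.1)) ?_
  exact (by fun_prop : Measurable fun q : (E × ℝ) × ℝ ↦ ENNReal.ofReal (q.2 ^ (-(q.1.2 + 1)))).mul
    ((measurable_one.indicator hs).comp (by fun_prop))

theorem setLIntegral_log_norm_radialKernel {p : E × ℝ} (hu : ‖p.1‖ = 1) (hz : 0 < p.2) :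
    ∫⁻ x in {x : E | 1 < ‖x‖}, ENNReal.ofReal (Real.log ‖x‖) ∂radialKernel p
      = ENNReal.ofReal ((p.2 ^ 2)⁻¹) := by
  have hs : MeasurableSet {x : E | 1 < ‖x‖} := measurableSet_lt measurable_const measurable_norm
  have hradial : ∀ w ∈ Ioi (0 : ℝ), ENNReal.ofReal (w ^ (-(p.2 + 1))) *
      {x : E | 1 < ‖x‖}.indicator (fun x ↦ ENNReal.ofReal (Real.log ‖x‖)) (w • p.1)
        = (Ioi 1).indicator (fun w ↦ ENNReal.ofReal (Real.log w * w ^ (-(p.2 + 1)))) w := by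
    intro w hw
    have hnorm : ‖w • p.1‖ = w := by rw [norm_smul, hu, mul_one, norm_of_nonneg hw.le]
    by_cases h1 : 1 < w
    · simp [indicator_of_mem, h1, hnorm, ← ENNReal.ofReal_mul (rpow_nonneg hw.le _), mul_comm]
    · simp [h1, hnorm]
  rw [← lintegral_indicator hs,
    lintegral_radialKernel _ (measurable_norm.log.ennreal_ofReal.indicator hs),
    setLIntegral_congr_fun measurableSet_Ioi hradial, lintegral_indicator measurableSet_Ioi,
    Measure.restrict_restrict measurableSet_Ioi, Ioi_inter_Ioi, max_eq_left zero_le_one]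
  exact lintegral_Ioi_one_log_mul_rpow hz

end RadialKernel

theorem Msig_log_moment_general
    {E : Type*} [NormedAddCommGroup E] [NormedSpace ℝ E]
    [MeasurableSpace E] [BorelSpace E]
    (σ : Measure (E × ℝ))
    (hσ : σ {p : E × ℝ | ‖p.1‖ = 1 ∧ p.2 ∈ Set.Ioo (0:ℝ) 2}ᶜ = 0) :
    ∫⁻ x in {x : E | 1 < ‖x‖}, ENNReal.ofReal (Real.log ‖x‖) ∂(Msig σ)
      = ∫⁻ p, ENNReal.ofReal ((p.2 ^ 2)⁻¹) ∂σ := by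
  have hs : MeasurableSet {x : E | 1 < ‖x‖} := measurableSet_lt measurable_const measurable_norm
  have hsupp : ∀ᵐ p ∂σ, ‖p.1‖ = 1 ∧ p.2 ∈ Ioo (0 : ℝ) 2 := mem_ae_iff.mpr hσ
  rw [← lintegral_indicator hs, Msig_eq_bind_radialKernel,
    Measure.lintegral_bind measurable_radialKernel.aemeasurable
      (measurable_norm.log.ennreal_ofReal.indicator hs).aemeasurable]
  refine lintegral_congr_ae (hsupp.mono fun p ⟨hu, hz⟩ ↦ ?_)
  dsimp only
  rw [lintegral_indicator hs]
  exact setLIntegral_log_norm_radialKernel hu hz.1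

/-- The logarithmic moment of `M_σ` outside the unit ball satisfies
`∫_{‖x‖>1} ln ‖x‖ M_σ(dx) = ∫_{S×(0,2)} z⁻² σ(d(u,z))`, the equality holding in `[0,∞]`;
in particular the moment is finite iff `∫ z⁻² dσ < ∞`. -/
theorem Msig_log_moment
    {E : Type*} [NormedAddCommGroup E] [NormedSpace ℝ E] [CompleteSpace E]
    [MeasurableSpace E] [BorelSpace E] [SecondCountableTopology E]
    (σ : Measure (E × ℝ)) [IsFiniteMeasure σ]
    (hσ : σ {p : E × ℝ | ‖p.1‖ = 1 ∧ p.2 ∈ Set.Ioo (0:ℝ) 2}ᶜ = 0) :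
    ∫⁻ x in {x : E | 1 < ‖x‖}, ENNReal.ofReal (Real.log ‖x‖) ∂(Msig σ)
      = ∫⁻ p, ENNReal.ofReal ((p.2 ^ 2)⁻¹) ∂σ :=
  Msig_log_moment_general σ hσ
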